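/- If Γ is a Coxeter graph of small type, then for every w∈W the inversion set Φ_w is a closed subset of Φ^+; that is, Φ_w is finite, ⟨α,β⟩ ≥ -1 for all α,β∈Φ_w, and α+β∈Φ_w whenever α,β∈Φ_w satisfy ⟨α,β⟩ = -1. -/

import Mathlib

noncomputable section

namespace ArtinInj

/-- `altProd a b m` is the alternating product `prod(a,b;m) = abab⋯` with `m` factors. -/
def altProd {G : Type*} [Monoid G] (a b : G) : ℕ → G
  | 0 => 1
  | n + 1 => a * altProd b a n

variable {S : Type} [DecidableEq S] [Fintype S]

/-- The braid relations on the free monoid over `S`.  Here `M s t = 0` encodes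
`m_{s,t} = ∞`. -/
def braidRel (M : CoxeterMatrix S) (u v : FreeMonoid S) : Prop :=
  ∃ s t : S, s ≠ t ∧ M s t ≠ 0 ∧
    u = altProd (FreeMonoid.of s) (FreeMonoid.of t) (M s t) ∧
    v = altProd (FreeMonoid.of t) (FreeMonoid.of s) (M s t)

/-- The Artin monoid `G_Γ⁺` of a Coxeter matrix. -/
abbrev ArtinMonoid (M : CoxeterMatrix S) : Type := PresentedMonoid (braidRel M)

/-- The generators `σ_s` of the Artin monoid. -/
def sigma (M : CoxeterMatrix S) (s : S) : ArtinMonoid M := PresentedMonoid.of (braidRel M) s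

/-- The braid relators in the free group over `S`. -/
def artinRels (M : CoxeterMatrix S) : Set (FreeGroup S) :=
  {r | ∃ s t : S, s ≠ t ∧ M s t ≠ 0 ∧
    r = altProd (FreeGroup.of s) (FreeGroup.of t) (M s t) *
        (altProd (FreeGroup.of t) (FreeGroup.of s) (M s t))⁻¹}

/-- The Artin group `G_Γ` of a Coxeter matrix. -/
abbrev ArtinGroup (M : CoxeterMatrix S) : Type := PresentedGroup (artinRels M)

/-- The generators `σ_s` of the Artin group. -/
def agen (M : CoxeterMatrix S) (s : S) : ArtinGroup M := PresentedGroup.of s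

/-- The partial order on the Artin monoid: `g < h ⟺ ∃ f, g f = h`. -/
def mle {M : CoxeterMatrix S} (g h : ArtinMonoid M) : Prop := ∃ f, g * f = h

/-- A Coxeter matrix is of small type when all off-diagonal entries are 2 or 3. -/
def SmallType (M : CoxeterMatrix S) : Prop := ∀ s t : S, s ≠ t → M s t = 2 ∨ M s t = 3

/-- `m ≥ 3` in `{2,3,...,∞}`, where `∞` is encoded by `0`. -/
def BigEntry (m : ℕ) : Prop := m = 0 ∨ 3 ≤ m

/-- A Coxeter matrix has no triangle when there are no three distinct vertices with
pairwise entries `≥ 3`. -/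
def NoTriangle (M : CoxeterMatrix S) : Prop :=
  ¬ ∃ s t r : S, s ≠ t ∧ s ≠ r ∧ t ≠ r ∧
      BigEntry (M s t) ∧ BigEntry (M s r) ∧ BigEntry (M t r)

variable {W : Type} [Group W]

/-- The partial order `u < v` on the Coxeter group: `l(v) = l(u) + l(u⁻¹ v)`. -/
def wle {M : CoxeterMatrix S} (cs : CoxeterSystem M W) (u v : W) : Prop :=
  cs.length v = cs.length u + cs.length (u⁻¹ * v)

/-- The simple root `α_s`. -/
def sroot (s : S) : S → ℝ := Pi.single s 1

/-- The entries `⟨α_s, α_t⟩ = -2 cos (π / m_{s,t})` of the canonical bilinear form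
(equal to `-2` when `m_{s,t} = ∞`, encoded by `M s t = 0`). -/
def formEnt (M : CoxeterMatrix S) (s t : S) : ℝ :=
  if M s t = 0 then -2 else -2 * Real.cos (Real.pi / (M s t : ℝ))

/-- The canonical symmetric bilinear form `⟨·,·⟩` on `U = ℝ^S`. -/
def form (M : CoxeterMatrix S) (x v : S → ℝ) : ℝ :=
  ∑ s : S, ∑ t : S, x s * v t * formEnt M s t

/-- `ρ` is the canonical (geometric) representation of the Coxeter system. -/
def IsGeomRep (M : CoxeterMatrix S) (cs : CoxeterSystem M W)
    (ρ : W →* ((S → ℝ) →ₗ[ℝ] (S → ℝ))) : Prop :=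
  ∀ (s : S) (x : S → ℝ), ρ (cs.simple s) x = x - form M (sroot s) x • sroot s

/-- The root system `Φ = {w α_s}`. -/
def Phi (ρ : W →* ((S → ℝ) →ₗ[ℝ] (S → ℝ))) : Set (S → ℝ) :=
  {u | ∃ (w : W) (s : S), u = ρ w (sroot s)}

/-- The positive roots `Φ⁺`. -/
def PhiPlus (ρ : W →* ((S → ℝ) →ₗ[ℝ] (S → ℝ))) : Set (S → ℝ) :=
  {u | u ∈ Phi ρ ∧ ∀ s : S, 0 ≤ u s}

/-- The negative roots `Φ⁻ = -Φ⁺`. -/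
def PhiMinus (ρ : W →* ((S → ℝ) →ₗ[ℝ] (S → ℝ))) : Set (S → ℝ) :=
  {u | -u ∈ PhiPlus ρ}

/-- The inversion set `Φ_w = {β ∈ Φ⁺ : w⁻¹ β ∈ Φ⁻}`. -/
def invSet (ρ : W →* ((S → ℝ) →ₗ[ℝ] (S → ℝ))) (w : W) : Set (S → ℝ) :=
  {u | u ∈ PhiPlus ρ ∧ ρ w⁻¹ u ∈ PhiMinus ρ}

/-- The depth `dp(β) = min { l(w) : w β ∈ Φ⁻ }` of a positive root. -/
def dp {M : CoxeterMatrix S} (cs : CoxeterSystem M W)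
    (ρ : W →* ((S → ℝ) →ₗ[ℝ] (S → ℝ))) (u : S → ℝ) : ℕ :=
  sInf {l : ℕ | ∃ w : W, ρ w u ∈ PhiMinus ρ ∧ cs.length w = l}

/-- Closed subsets of `Φ⁺`. -/
def ClosedSub (M : CoxeterMatrix S) (ρ : W →* ((S → ℝ) →ₗ[ℝ] (S → ℝ)))
    (A : Set (S → ℝ)) : Prop :=
  A ⊆ PhiPlus ρ ∧ A.Finite ∧
    (∀ a ∈ A, ∀ b ∈ A, -1 ≤ form M a b) ∧
    (∀ a ∈ A, ∀ b ∈ A, form M a b = -1 → a + b ∈ A)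

/-- The field `K = ℚ(x,y)` of rational functions in two variables over `ℚ`. -/
abbrev KK : Type := FractionRing (MvPolynomial (Fin 2) ℚ)

/-- The variable `x` of `K`. -/
def Xv : KK := algebraMap (MvPolynomial (Fin 2) ℚ) KK (MvPolynomial.X 0)

/-- The variable `y` of `K`. -/
def Yv : KK := algebraMap (MvPolynomial (Fin 2) ℚ) KK (MvPolynomial.X 1)

/-- The image in `K` of a polynomial of `ℚ[y]`. -/
def Ty (p : Polynomial ℚ) : KK := Polynomial.eval₂ (Rat.castHom KK) Yv p

/-- The `K`-vector space `V` with basis `{e_β : β ∈ Φ⁺}`. -/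
abbrev VV (ρ : W →* ((S → ℝ) →ₗ[ℝ] (S → ℝ))) : Type := ↥(PhiPlus ρ) →₀ KK

/-- The basis vectors `e_β` of `V` (defined to be `0` for `β ∉ Φ⁺`). -/
def ebase (ρ : W →* ((S → ℝ) →ₗ[ℝ] (S → ℝ))) (u : S → ℝ) : VV ρ := by
  haveI := Classical.dec (u ∈ PhiPlus ρ)
  exact if h : u ∈ PhiPlus ρ then Finsupp.single (⟨u, h⟩ : ↥(PhiPlus ρ)) (1 : KK) else 0

/-- `φ : S → End(V)` is the family of linear maps `φ_s` of Section 3 of the paper. -/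
def PhiMapSpec (M : CoxeterMatrix S) (ρ : W →* ((S → ℝ) →ₗ[ℝ] (S → ℝ)))
    (φ : S → Module.End KK (VV ρ)) : Prop :=
  ∀ s : S, ∀ u ∈ PhiPlus ρ,
    (u = sroot s → φ s (ebase ρ u) = 0) ∧
    (form M (sroot s) u = 0 → φ s (ebase ρ u) = ebase ρ u) ∧
    (0 < form M (sroot s) u → u ≠ sroot s →
      φ s (ebase ρ u) = Yv • ebase ρ (u - form M (sroot s) u • sroot s)) ∧
    (form M (sroot s) u < 0 →
      φ s (ebase ρ u) = (1 - Yv) • ebase ρ u + ebase ρ (u - form M (sroot s) u • sroot s))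

/-- `T : S × Φ⁺ → ℚ[y]` is the family of polynomials `T(s,β)` defined by (D1)–(D9),
by induction on the depth of `β`; the recursion may be applied with any `t ∈ S`
such that `dp(t β) = dp(β) - 1`. -/
def TSpec (M : CoxeterMatrix S) (cs : CoxeterSystem M W)
    (ρ : W →* ((S → ℝ) →ₗ[ℝ] (S → ℝ))) (T : S → (S → ℝ) → Polynomial ℚ) : Prop :=
  (∀ s : S, T s (sroot s) = Polynomial.X ^ 2) ∧
  (∀ s t : S, t ≠ s → T s (sroot t) = 0) ∧
  (∀ s t : S, ∀ u ∈ PhiPlus ρ, 2 ≤ dp cs ρ u →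
    0 < form M (sroot t) u → dp cs ρ (ρ (cs.simple t) u) = dp cs ρ u - 1 →
    (0 < form M (sroot s) u →
      T s u = Polynomial.X ^ (dp cs ρ u) * (Polynomial.X - 1)) ∧
    (form M (sroot s) u = 0 → form M (sroot s) (sroot t) = 0 →
      T s u = Polynomial.X * T s (u - form M (sroot t) u • sroot t)) ∧
    (form M (sroot s) u = 0 → form M (sroot s) (sroot t) = -1 →
      T s u = (Polynomial.X - 1) * T s (u - form M (sroot t) u • sroot t) +
        Polynomial.X * T t (u - form M (sroot t) u • sroot s - form M (sroot t) u • sroot t)) ∧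
    (form M (sroot s) u < 0 → form M (sroot s) (sroot t) = 0 →
      T s u = Polynomial.X * T s (u - form M (sroot t) u • sroot t)) ∧
    (form M (sroot s) u < 0 → form M (sroot s) (sroot t) = -1 →
      -(form M (sroot s) u) < form M (sroot t) u →
      T s u = (Polynomial.X - 1) * T s (u - form M (sroot t) u • sroot t) +
        Polynomial.X * T t (u - (form M (sroot t) u + form M (sroot s) u) • sroot s
          - form M (sroot t) u • sroot t)) ∧
    (form M (sroot s) u < 0 → form M (sroot s) (sroot t) = -1 →
      -(form M (sroot s) u) = form M (sroot t) u →
      T s u = T t (u - form M (sroot t) u • sroot t) +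
        (Polynomial.X - 1) * T s (u - form M (sroot t) u • sroot t)) ∧
    (form M (sroot s) u < 0 → form M (sroot s) (sroot t) = -1 →
      form M (sroot t) u < -(form M (sroot s) u) →
      T s u = Polynomial.X * T s (u - form M (sroot t) u • sroot t) +
        T t (u - form M (sroot t) u • sroot t) +
        Polynomial.X ^ (dp cs ρ u - 1) * (1 - Polynomial.X)))

/-- `ψ : S → End(V)` is the family of linear maps `ψ_s(e_β) = φ_s(e_β) + x T(s,β) e_{α_s}`. -/
def PsiSpec (M : CoxeterMatrix S) (ρ : W →* ((S → ℝ) →ₗ[ℝ] (S → ℝ)))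
    (T : S → (S → ℝ) → Polynomial ℚ) (ψ : S → Module.End KK (VV ρ)) : Prop :=
  ∀ s : S, ∀ u ∈ PhiPlus ρ,
    (u = sroot s → ψ s (ebase ρ u) = (Xv * Ty (T s u)) • ebase ρ (sroot s)) ∧
    (form M (sroot s) u = 0 →
      ψ s (ebase ρ u) = ebase ρ u + (Xv * Ty (T s u)) • ebase ρ (sroot s)) ∧
    (0 < form M (sroot s) u → u ≠ sroot s →
      ψ s (ebase ρ u) = Yv • ebase ρ (u - form M (sroot s) u • sroot s) +
        (Xv * Ty (T s u)) • ebase ρ (sroot s)) ∧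
    (form M (sroot s) u < 0 →
      ψ s (ebase ρ u) = (1 - Yv) • ebase ρ u +
        ebase ρ (u - form M (sroot s) u • sroot s) +
        (Xv * Ty (T s u)) • ebase ρ (sroot s))

/-- The set `σ_s ∗ A` (Lemma 4.4 of the paper). -/
def starSet (M : CoxeterMatrix S) (ρ : W →* ((S → ℝ) →ₗ[ℝ] (S → ℝ)))
    (s : S) (A : Set (S → ℝ)) : Set (S → ℝ) :=
  {sroot s} ∪
  {u | u ∈ PhiPlus ρ ∧ form M (sroot s) u = 0 ∧ u ∈ A} ∪
  {u | u ∈ PhiPlus ρ ∧ 0 < form M (sroot s) u ∧ u ≠ sroot s ∧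
        u - form M (sroot s) u • sroot s ∈ A} ∪
  {u | u ∈ PhiPlus ρ ∧ form M (sroot s) u < 0 ∧ u ∈ A ∧
        u - form M (sroot s) u • sroot s ∈ A}

end ArtinInj

/-!
In small type the geometric representation preserves integrality, so roots have integer
coordinates and `⟨α, β⟩ ∈ ℤ` for roots. Induction on length, using only the braid relations for
`m_{st} ∈ {2, 3}`, shows that `w α_s ≥ 0` whenever `ℓ(w s) > ℓ(w)`; hence every root is positive
or negative, and `α_s` is the only positive root made negative by `s`. This gives
`Φ_{ws} ⊆ Φ_w ∪ {w α_s}`, so `Φ_w` is finite. Being cut out by sign conditions, `Φ_w` contains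
every root that is a nonnegative combination of two of its elements, in particular
`b - ⟨a, b⟩ a = a + b` when `⟨a, b⟩ = -1`. Finally, if some `⟨y, x⟩ ≤ -2` inside `Φ_w`, reflecting
produces such a pair with a strictly larger member, which cannot go on in a finite set.
-/

namespace ArtinInj

variable {S : Type} {W : Type} [Group W]

section Form

variable (M : CoxeterMatrix S)

lemma formEnt_self (s : S) : formEnt M s s = 2 := by
  simp [formEnt]

lemma formEnt_comm (s t : S) : formEnt M s t = formEnt M t s := by
  rw [formEnt, formEnt, M.symmetric]

variable {M} in
lemma formEnt_of_eq_two {s t : S} (h : M s t = 2) : formEnt M s t = 0 := by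
  simp [formEnt, h]

variable {M} in
lemma formEnt_of_eq_three {s t : S} (h : M s t = 3) : formEnt M s t = -1 := by
  simp [formEnt, h, Real.cos_pi_div_three]

variable {M} in
lemma formEnt_nonpos (hsmall : SmallType M) {s t : S} (hst : s ≠ t) : formEnt M s t ≤ 0 := by
  rcases hsmall s t hst with h | h
  · rw [formEnt_of_eq_two h]
  · rw [formEnt_of_eq_three h]; norm_num

variable [Fintype S]

lemma form_comm (x y : S → ℝ) : form M x y = form M y x := by
  rw [form, form, Finset.sum_comm]
  exact Finset.sum_congr rfl fun s _ => Finset.sum_congr rfl fun t _ => by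
    rw [formEnt_comm]; ring

lemma form_add_left (x y z : S → ℝ) : form M (x + y) z = form M x z + form M y z := by
  simp only [form, Pi.add_apply, add_mul, Finset.sum_add_distrib]

lemma form_smul_left (c : ℝ) (x z : S → ℝ) : form M (c • x) z = c * form M x z := by
  simp only [form, Pi.smul_apply, smul_eq_mul, Finset.mul_sum, mul_assoc]

lemma form_sub_left (x y z : S → ℝ) : form M (x - y) z = form M x z - form M y z := by
  rw [sub_eq_add_neg, ← neg_one_smul ℝ y, form_add_left, form_smul_left]
  ring

lemma form_smul_right (c : ℝ) (x z : S → ℝ) : form M x (c • z) = c * form M x z := by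
  simp only [form_comm M x, form_smul_left]

lemma form_sub_right (x y z : S → ℝ) : form M x (y - z) = form M x y - form M x z := by
  simp only [form_comm M x, form_sub_left]

lemma form_zero_left (z : S → ℝ) : form M 0 z = 0 := by
  simp [form]

lemma form_sroot_sroot [DecidableEq S] (s t : S) : form M (sroot s) (sroot t) = formEnt M s t := by
  simp [form, sroot, Pi.single_apply]

end Form

section GeometricRepresentation

variable {M : CoxeterMatrix S} {cs : CoxeterSystem M W} {rho : W →* ((S → ℝ) →ₗ[ℝ] (S → ℝ))}

lemma rho_mul_apply (u v : W) (x : S → ℝ) : rho (u * v) x = rho u (rho v x) := by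
  rw [map_mul, Module.End.mul_apply]

lemma rho_apply_rho_inv (v : W) (x : S → ℝ) : rho v (rho v⁻¹ x) = x := by
  rw [← rho_mul_apply, mul_inv_cancel, map_one, Module.End.one_apply]

variable [DecidableEq S]

lemma mem_PhiPlus_iff {u : S → ℝ} : u ∈ PhiPlus rho ↔ u ∈ Phi rho ∧ 0 ≤ u := Iff.rfl

lemma rho_mem_Phi {u : S → ℝ} (v : W) (hu : u ∈ Phi rho) : rho v u ∈ Phi rho := by
  obtain ⟨w, s, rfl⟩ := hu
  exact ⟨v * w, s, (rho_mul_apply v w _).symm⟩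

lemma sroot_mem_PhiPlus (s : S) : sroot s ∈ PhiPlus rho :=
  mem_PhiPlus_iff.2 ⟨⟨1, s, by simp⟩, Pi.single_nonneg.2 zero_le_one⟩

variable [Fintype S] (hrho : IsGeomRep M cs rho)
include hrho

lemma rho_simple_sroot (t s : S) :
    rho (cs.simple t) (sroot s) = sroot s - formEnt M t s • sroot t := by
  rw [hrho, form_sroot_sroot]

lemma rho_simple_sroot_self (s : S) : rho (cs.simple s) (sroot s) = -sroot s := by
  rw [rho_simple_sroot hrho, formEnt_self]
  module

lemma rho_simple_mul_simple_sroot_of_eq_three {s t : S} (hM : M s t = 3) :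
    rho (cs.simple s * cs.simple t) (sroot s) = sroot t := by
  rw [rho_mul_apply, rho_simple_sroot hrho, formEnt_of_eq_three (M.symmetric s t ▸ hM), map_sub,
    map_smul, rho_simple_sroot_self hrho, rho_simple_sroot hrho, formEnt_of_eq_three hM]
  module

lemma form_rho (w : W) (x y : S → ℝ) : form M (rho w x) (rho w y) = form M x y := by
  induction w using cs.simple_induction generalizing x y with
  | simple s =>
    simp only [hrho s, form_sub_left, form_sub_right, form_smul_left, form_smul_right,
      form_sroot_sroot, formEnt_self, form_comm M x (sroot s)]
    ring
  | one => simp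
  | mul u v hu hv => rw [rho_mul_apply, rho_mul_apply, hu, hv]

lemma neg_mem_Phi {u : S → ℝ} (hu : u ∈ Phi rho) : -u ∈ Phi rho := by
  obtain ⟨w, s, rfl⟩ := hu
  exact ⟨w * cs.simple s, s, by rw [rho_mul_apply, rho_simple_sroot_self hrho, map_neg]⟩

lemma mem_PhiMinus_iff {u : S → ℝ} : u ∈ PhiMinus rho ↔ u ∈ Phi rho ∧ u ≤ 0 := by
  refine ⟨fun ⟨hΦ, hle⟩ => ⟨neg_neg u ▸ neg_mem_Phi hrho hΦ, neg_nonneg.1 hle⟩,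
    fun ⟨hΦ, hle⟩ => ⟨neg_mem_Phi hrho hΦ, neg_nonneg.2 hle⟩⟩

lemma form_self_of_mem_Phi {u : S → ℝ} (hu : u ∈ Phi rho) : form M u u = 2 := by
  obtain ⟨w, s, rfl⟩ := hu
  rw [form_rho hrho, form_sroot_sroot, formEnt_self]

lemma ne_zero_of_mem_Phi {u : S → ℝ} (hu : u ∈ Phi rho) : u ≠ 0 := by
  rintro rfl
  simpa [form_zero_left] using form_self_of_mem_Phi hrho hu

lemma pos_of_mem_PhiPlus {u : S → ℝ} (hu : u ∈ PhiPlus rho) : 0 < u :=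
  lt_of_le_of_ne hu.2 (ne_zero_of_mem_Phi hrho hu.1).symm

lemma notMem_PhiMinus_of_mem_PhiPlus {u : S → ℝ} (hu : u ∈ PhiPlus rho) : u ∉ PhiMinus rho :=
  fun hu' => (pos_of_mem_PhiPlus hrho hu).not_ge ((mem_PhiMinus_iff hrho).1 hu').2

lemma exists_rho_eq_reflection {u : S → ℝ} (hu : u ∈ Phi rho) :
    ∃ z : W, ∀ x, rho z x = x - form M u x • u := by
  obtain ⟨w, s, rfl⟩ := hu
  refine ⟨w * cs.simple s * w⁻¹, fun x => ?_⟩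
  rw [rho_mul_apply, rho_mul_apply, hrho, map_sub, map_smul, rho_apply_rho_inv,
    ← form_rho hrho w, rho_apply_rho_inv]

lemma reflection_mem_Phi {u v : S → ℝ} (hu : u ∈ Phi rho) (hv : v ∈ Phi rho) :
    v - form M u v • u ∈ Phi rho := by
  obtain ⟨z, hz⟩ := exists_rho_eq_reflection hrho hu
  exact hz v ▸ rho_mem_Phi z hv

end GeometricRepresentation

section Integrality

variable {M : CoxeterMatrix S}

def HasIntCoords (x : S → ℝ) : Prop := ∀ s, x s ∈ (Int.castRingHom ℝ).range

lemma formEnt_mem_range_intCast (hsmall : SmallType M) (s t : S) :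
    formEnt M s t ∈ (Int.castRingHom ℝ).range := by
  rcases eq_or_ne s t with rfl | hst
  · exact ⟨2, by simp [formEnt_self]⟩
  · rcases hsmall s t hst with h | h
    · exact ⟨0, by simp [formEnt_of_eq_two h]⟩
    · exact ⟨-1, by simp [formEnt_of_eq_three h]⟩

lemma hasIntCoords_sroot [DecidableEq S] (s : S) : HasIntCoords (sroot s) := fun t => by
  rcases eq_or_ne t s with rfl | hts
  · exact ⟨1, by simp [sroot]⟩
  · exact ⟨0, by simp [sroot, hts]⟩

variable [Fintype S]

lemma form_mem_range_intCast (hsmall : SmallType M) {x y : S → ℝ} (hx : HasIntCoords x)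
    (hy : HasIntCoords y) : form M x y ∈ (Int.castRingHom ℝ).range :=
  Subring.sum_mem _ fun s _ => Subring.sum_mem _ fun t _ =>
    mul_mem (mul_mem (hx s) (hy t)) (formEnt_mem_range_intCast hsmall s t)

variable [DecidableEq S] {cs : CoxeterSystem M W} {rho : W →* ((S → ℝ) →ₗ[ℝ] (S → ℝ))}
  (hsmall : SmallType M) (hrho : IsGeomRep M cs rho)
include hsmall hrho

lemma hasIntCoords_of_mem_Phi {u : S → ℝ} (hu : u ∈ Phi rho) : HasIntCoords u := by
  obtain ⟨w, s, rfl⟩ := hu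
  suffices ∀ x, HasIntCoords x → HasIntCoords (rho w x) from this _ (hasIntCoords_sroot s)
  induction w using cs.simple_induction with
  | simple s =>
    intro x hx t
    rw [hrho, Pi.sub_apply, Pi.smul_apply, smul_eq_mul]
    exact sub_mem (hx t)
      (mul_mem (form_mem_range_intCast hsmall (hasIntCoords_sroot s) hx) (hasIntCoords_sroot s t))
  | one => simp
  | mul u v hu hv => exact fun x hx => rho_mul_apply u v x ▸ hu _ (hv x hx)

lemma form_le_neg_two_of_lt_neg_one {u v : S → ℝ} (hu : u ∈ Phi rho) (hv : v ∈ Phi rho)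
    (h : form M u v < -1) : form M u v ≤ -2 := by
  obtain ⟨n, hn⟩ := form_mem_range_intCast hsmall (hasIntCoords_of_mem_Phi hsmall hrho hu)
    (hasIntCoords_of_mem_Phi hsmall hrho hv)
  rw [← hn, eq_intCast] at h ⊢
  have : n < -1 := by exact_mod_cast h
  exact_mod_cast (by omega : n ≤ -2)

end Integrality

section Braid

variable {M : CoxeterMatrix S} {cs : CoxeterSystem M W}

lemma simple_mul_simple_comm_of_eq_two {s t : S} (hM : M s t = 2) :
    cs.simple s * cs.simple t = cs.simple t * cs.simple s := by
  simpa [CoxeterSystem.braidWord, hM, M.symmetric t s, CoxeterSystem.alternatingWord,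
    CoxeterSystem.wordProd_cons] using cs.wordProd_braidWord_eq s t

lemma simple_braid_of_eq_three {s t : S} (hM : M s t = 3) :
    cs.simple s * cs.simple t * cs.simple s = cs.simple t * cs.simple s * cs.simple t := by
  simpa [CoxeterSystem.braidWord, hM, M.symmetric t s, CoxeterSystem.alternatingWord,
    CoxeterSystem.wordProd_cons, mul_assoc] using (cs.wordProd_braidWord_eq s t).symm

end Braid

section Descent

variable {M : CoxeterMatrix S} {cs : CoxeterSystem M W} {w : W} {s t : S}

lemma isRightDescent_of_eq_two (hM : M s t = 2) (ht : cs.IsRightDescent w t)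
    (hs : cs.IsRightDescent (w * cs.simple t) s) : cs.IsRightDescent w s := by
  have hw : w * cs.simple s = w * cs.simple t * cs.simple s * cs.simple t := by
    rw [mul_assoc _ (cs.simple s), simple_mul_simple_comm_of_eq_two hM, ← mul_assoc,
      cs.simple_mul_simple_cancel_right]
  have hle := cs.length_mul_le (w * cs.simple t * cs.simple s) (cs.simple t)
  unfold CoxeterSystem.IsRightDescent at *
  rw [cs.length_simple, ← hw] at hle
  omega

lemma isRightDescent_of_eq_three (hM : M s t = 3) (ht : cs.IsRightDescent w t)
    (hs : cs.IsRightDescent (w * cs.simple t) s)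
    (ht' : cs.IsRightDescent (w * cs.simple t * cs.simple s) t) : cs.IsRightDescent w s := by
  have hw : w * cs.simple s =
      w * cs.simple t * cs.simple s * cs.simple t * cs.simple s * cs.simple t := by
    have hb := simple_braid_of_eq_three (cs := cs) (M.symmetric s t ▸ hM)
    rw [show w * cs.simple t * cs.simple s * cs.simple t * cs.simple s * cs.simple t =
      w * (cs.simple t * cs.simple s * cs.simple t) * (cs.simple s * cs.simple t) by
        simp only [mul_assoc], hb]
    simp only [mul_assoc, cs.simple_mul_simple_cancel_left, cs.simple_mul_simple_self, mul_one]
  have hle₁ := cs.length_mul_le (w * cs.simple t * cs.simple s * cs.simple t * cs.simple s)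
    (cs.simple t)
  have hle₂ := cs.length_mul_le (w * cs.simple t * cs.simple s * cs.simple t) (cs.simple s)
  unfold CoxeterSystem.IsRightDescent at *
  rw [cs.length_simple, ← hw] at hle₁
  rw [cs.length_simple] at hle₂
  omega

end Descent

section Positivity

variable [DecidableEq S] [Fintype S] {M : CoxeterMatrix S} {cs : CoxeterSystem M W}
  {rho : W →* ((S → ℝ) →ₗ[ℝ] (S → ℝ))} (hsmall : SmallType M) (hrho : IsGeomRep M cs rho)
include hsmall hrho

theorem rho_sroot_nonneg_of_not_isRightDescent {w : W} {s : S} (h : ¬ cs.IsRightDescent w s) :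
    0 ≤ rho w (sroot s) := by
  induction hn : cs.length w using Nat.strong_induction_on generalizing w s with
  | _ n ih =>
  rcases eq_or_ne w 1 with rfl | hw1
  · simpa using (mem_PhiPlus_iff.1 (sroot_mem_PhiPlus (rho := rho) s)).2
  obtain ⟨t, ht⟩ := cs.exists_rightDescent_of_ne_one hw1
  have hts : t ≠ s := by rintro rfl; exact h ht
  set v := w * cs.simple t
  have hwv : w = v * cs.simple t := (cs.simple_mul_simple_cancel_right t).symm
  have hv : cs.length v < n := hn ▸ ht
  by_cases hs : cs.IsRightDescent v s
  · -- Two descents force `m_{st} = 3`; then `w α_s = (v s) α_t` and `v s` ascends at `t`.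
    have hM : M s t = 3 := (hsmall s t hts.symm).resolve_left
      fun h2 => h (isRightDescent_of_eq_two h2 ht hs)
    have ht' : ¬ cs.IsRightDescent (v * cs.simple s) t :=
      fun ht' => h (isRightDescent_of_eq_three hM ht hs ht')
    rw [hwv, ← cs.simple_mul_simple_cancel_right (w := v) s, mul_assoc _ _ (cs.simple t),
      rho_mul_apply, rho_simple_mul_simple_sroot_of_eq_three hrho hM]
    exact ih _ (lt_trans hs hv) ht' rfl
  · -- `w α_s = v α_s - ⟨α_t, α_s⟩ v α_t`, both roots positive and `-⟨α_t, α_s⟩ ≥ 0`.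
    have hvt : ¬ cs.IsRightDescent v t := cs.isRightDescent_iff_not_isRightDescent_mul.1 ht
    rw [hwv, rho_mul_apply, rho_simple_sroot hrho, map_sub, map_smul, sub_eq_add_neg, ← neg_smul]
    exact add_nonneg (ih _ hv hs rfl)
      (smul_nonneg (neg_nonneg.2 (formEnt_nonpos hsmall hts)) (ih _ hv hvt rfl))

theorem mem_PhiPlus_or_mem_PhiMinus {u : S → ℝ} (hu : u ∈ Phi rho) :
    u ∈ PhiPlus rho ∨ u ∈ PhiMinus rho := by
  obtain ⟨w, s, rfl⟩ := hu
  by_cases h : cs.IsRightDescent w s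
  · refine Or.inr ((mem_PhiMinus_iff hrho).2 ⟨⟨w, s, rfl⟩, ?_⟩)
    have := rho_sroot_nonneg_of_not_isRightDescent hsmall hrho
      (cs.isRightDescent_iff_not_isRightDescent_mul.1 h)
    rwa [rho_mul_apply, rho_simple_sroot_self hrho, map_neg, neg_nonneg] at this
  · exact Or.inl ⟨⟨w, s, rfl⟩, rho_sroot_nonneg_of_not_isRightDescent hsmall hrho h⟩

lemma eq_sroot_of_rho_simple_notMem_PhiPlus {γ : S → ℝ} {s : S} (hγ : γ ∈ PhiPlus rho)
    (h : rho (cs.simple s) γ ∉ PhiPlus rho) : γ = sroot s := by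
  have hneg : rho (cs.simple s) γ ≤ 0 := ((mem_PhiMinus_iff hrho).1
    ((mem_PhiPlus_or_mem_PhiMinus hsmall hrho (rho_mem_Phi _ hγ.1)).resolve_left h)).2
  have hγs : γ = γ s • sroot s := by
    funext t
    rcases eq_or_ne t s with rfl | hts
    · simp [sroot]
    · have := hneg t
      rw [hrho] at this
      simp only [Pi.sub_apply, Pi.smul_apply, Pi.zero_apply, sroot, Pi.single_eq_of_ne hts,
        smul_zero, sub_zero] at this ⊢
      linarith [hγ.2 t]
  have h2 := form_self_of_mem_Phi hrho hγ.1
  rw [hγs, form_smul_left, form_smul_right, form_sroot_sroot, formEnt_self] at h2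
  have h1 : γ s = 1 := by nlinarith [hγ.2 s]
  rw [hγs, h1, one_smul]

end Positivity

section InversionSet

variable [DecidableEq S] [Fintype S] {M : CoxeterMatrix S} {cs : CoxeterSystem M W}
  {rho : W →* ((S → ℝ) →ₗ[ℝ] (S → ℝ))}

lemma invSet_one (hrho : IsGeomRep M cs rho) : invSet rho 1 = ∅ :=
  Set.eq_empty_of_forall_notMem fun _ ⟨hu, hu'⟩ =>
    notMem_PhiMinus_of_mem_PhiPlus hrho hu (by simpa using hu')

lemma smul_add_smul_mem_invSet (hrho : IsGeomRep M cs rho) {w : W} {a b : S → ℝ} {c d : ℝ}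
    (ha : a ∈ invSet rho w) (hb : b ∈ invSet rho w) (hc : 0 ≤ c) (hd : 0 ≤ d)
    (hΦ : c • a + d • b ∈ Phi rho) : c • a + d • b ∈ invSet rho w := by
  refine ⟨mem_PhiPlus_iff.2 ⟨hΦ, add_nonneg (smul_nonneg hc (mem_PhiPlus_iff.1 ha.1).2)
      (smul_nonneg hd (mem_PhiPlus_iff.1 hb.1).2)⟩,
    (mem_PhiMinus_iff hrho).2 ⟨rho_mem_Phi _ hΦ, ?_⟩⟩
  rw [map_add, map_smul, map_smul]
  exact add_nonpos (smul_nonpos_of_nonneg_of_nonpos hc ((mem_PhiMinus_iff hrho).1 ha.2).2)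
    (smul_nonpos_of_nonneg_of_nonpos hd ((mem_PhiMinus_iff hrho).1 hb.2).2)

lemma reflection_mem_invSet (hrho : IsGeomRep M cs rho) {w : W} {a b : S → ℝ}
    (ha : a ∈ invSet rho w) (hb : b ∈ invSet rho w) (h : form M a b ≤ 0) :
    b - form M a b • a ∈ invSet rho w := by
  have key : b - form M a b • a = (-form M a b) • a + (1 : ℝ) • b := by module
  rw [key]
  exact smul_add_smul_mem_invSet hrho ha hb (neg_nonneg.2 h) zero_le_one
    (key ▸ reflection_mem_Phi hrho ha.1.1 hb.1.1)

variable (hsmall : SmallType M) (hrho : IsGeomRep M cs rho)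
include hsmall hrho

lemma invSet_mul_simple_subset (w : W) (s : S) :
    invSet rho (w * cs.simple s) ⊆ insert (rho w (sroot s)) (invSet rho w) := by
  rintro β ⟨hβ, hβ'⟩
  rw [mul_inv_rev, cs.inv_simple, rho_mul_apply] at hβ'
  rcases mem_PhiPlus_or_mem_PhiMinus hsmall hrho (rho_mem_Phi w⁻¹ hβ.1) with hγ | hγ
  · left
    rw [← eq_sroot_of_rho_simple_notMem_PhiPlus hsmall hrho hγ
      fun h => notMem_PhiMinus_of_mem_PhiPlus hrho h hβ', rho_apply_rho_inv]
  · exact Or.inr ⟨hβ, hγ⟩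

theorem invSet_finite (w : W) : (invSet rho w).Finite := by
  induction w using cs.simple_induction_right with
  | one => simp [invSet_one hrho]
  | mul_simple_right w s hw =>
    exact (hw.insert _).subset (invSet_mul_simple_subset hsmall hrho w s)

theorem neg_one_le_form_of_mem_invSet {w : W} {a b : S → ℝ} (ha : a ∈ invSet rho w)
    (hb : b ∈ invSet rho w) : -1 ≤ form M a b := by
  by_contra! hlt
  set P : Set (S → ℝ) := {x | x ∈ invSet rho w ∧ ∃ y ∈ invSet rho w, form M y x ≤ -2}
  have hP : P.Finite := (invSet_finite hsmall hrho w).subset fun _ hx => hx.1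
  obtain ⟨x, ⟨hx, y, hy, hyx⟩, hmax⟩ := hP.exists_maximal
    ⟨b, hb, a, ha, form_le_neg_two_of_lt_neg_one hsmall hrho ha.1.1 hb.1.1 hlt⟩
  -- The reflection `x - ⟨y, x⟩ y` lies in `P` (with partner `x`) and strictly above `x`.
  have hx' : x - form M y x • y ∈ invSet rho w := reflection_mem_invSet hrho hy hx (by linarith)
  have hxx' : form M x (x - form M y x • y) ≤ -2 := by
    rw [form_sub_right, form_smul_right, form_comm M x y, form_self_of_mem_Phi hrho hx.1.1]
    nlinarith
  have hlt' : x < x - form M y x • y := by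
    rw [sub_eq_add_neg, ← neg_smul]
    exact lt_add_of_pos_right x (smul_pos (by linarith) (pos_of_mem_PhiPlus hrho hy.1))
  exact hlt'.not_ge (hmax ⟨hx', x, hx, hxx'⟩ hlt'.le)

end InversionSet

/-- **Lemma 2.7.** In small type, every inversion set `Φ_w` is a closed subset of `Φ⁺`. -/
theorem stmt5 {S : Type} [DecidableEq S] [Fintype S] {W : Type} [Group W]
    (M : CoxeterMatrix S) (hsmall : SmallType M) (cs : CoxeterSystem M W)
    (rho : W →* ((S → ℝ) →ₗ[ℝ] (S → ℝ))) (hrho : IsGeomRep M cs rho)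
    (w : W) :
    ClosedSub M rho (invSet rho w) := by
  refine ⟨fun u hu => hu.1, invSet_finite hsmall hrho w,
    fun a ha b hb => neg_one_le_form_of_mem_invSet hsmall hrho ha hb, fun a ha b hb hab => ?_⟩
  simpa [hab, add_comm] using reflection_mem_invSet hrho ha hb (hab.trans_le (by norm_num))

end ArtinInj
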